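/- arXiv:1407.4145 — 6 statements merged into one kernel-verified Lean document; each statement's English description precedes it below -/
import Mathlib

section
/- For any real α and nonnegative integers m, n with n ≥ m+1, define the Type III exceptional X_m-Laguerre polynomial by L_{m,n}^{III,α}(x) = x·L_{n-m-2}^{α+2}(x)·L_m^{-α-1}(-x) + (m+1)·L_{n-m-1}^{α+1}(x)·L_{m+1}^{-α-2}(-x). Then the coefficient of x^n in L_{m,n}^{III,α}(x) is nonzero, so deg(L_{m,n}^{III,α}) = n exactly. -/
open Finset

/-- Generalized Laguerre polynomial `L_n^α(x) = ∑_{k=0}^n (-1)^k binom(n+α, n-k) x^k / k!`. -/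
noncomputable def lag (α : ℝ) (n : ℕ) (x : ℝ) : ℝ :=
  ∑ k ∈ Finset.range (n + 1),
    (-1 : ℝ) ^ k * (∏ j ∈ Finset.range (n - k), (α + (k : ℝ) + 1 + (j : ℝ))) /
      ((Nat.factorial (n - k) : ℝ) * (Nat.factorial k : ℝ)) * x ^ k

/-- Generalized Laguerre polynomial with integer index, with the convention
`L_n^α := 0` for `n < 0`. -/
noncomputable def lagZ (α : ℝ) (n : ℤ) (x : ℝ) : ℝ :=
  if 0 ≤ n then lag α n.toNat x else 0

/-- Generalized Laguerre polynomial as a `Polynomial ℝ`. -/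
noncomputable def lagP (α : ℝ) (n : ℕ) : Polynomial ℝ :=
  ∑ k ∈ Finset.range (n + 1),
    Polynomial.C ((-1 : ℝ) ^ k * (∏ j ∈ Finset.range (n - k), (α + (k : ℝ) + 1 + (j : ℝ))) /
      ((Nat.factorial (n - k) : ℝ) * (Nat.factorial k : ℝ))) * Polynomial.X ^ k

/-- Integer-indexed version, with convention `L_n^α := 0` for `n < 0`. -/
noncomputable def lagPZ (α : ℝ) (n : ℤ) : Polynomial ℝ :=
  if 0 ≤ n then lagP α n.toNat else 0

lemma lagP_coeff_self (α : ℝ) (n : ℕ) :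
    (lagP α n).coeff n = (-1 : ℝ) ^ n / n.factorial := by
  rw [lagP, Polynomial.finset_sum_coeff]
  rw [Finset.sum_eq_single n]
  · simp [Polynomial.coeff_C_mul, Polynomial.coeff_X_pow]
  · intro k hk hkn
    simp [Polynomial.coeff_C_mul, Polynomial.coeff_X_pow, Ne.symm hkn]
  · intro hn; simp at hn

lemma lagP_degree_le (α : ℝ) (n : ℕ) : (lagP α n).degree ≤ n := by
  refine (Polynomial.degree_sum_le _ _).trans ?_
  apply Finset.sup_le
  intro k hk
  refine (Polynomial.degree_C_mul_X_pow_le _ _).trans ?_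
  exact_mod_cast Nat.cast_le.mpr (Nat.lt_succ_iff.mp (Finset.mem_range.mp hk))

lemma lagP_coeff_ne (α : ℝ) (n : ℕ) : (lagP α n).coeff n ≠ 0 := by
  rw [lagP_coeff_self]; positivity

lemma lagP_degree (α : ℝ) (n : ℕ) : (lagP α n).degree = n :=
  le_antisymm (lagP_degree_le α n) (Polynomial.le_degree_of_ne_zero (lagP_coeff_ne α n))

lemma lagP_natDegree (α : ℝ) (n : ℕ) : (lagP α n).natDegree = n :=
  Polynomial.natDegree_eq_of_degree_eq_some (lagP_degree α n)

lemma lagP_leadingCoeff (α : ℝ) (n : ℕ) :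
    (lagP α n).leadingCoeff = (-1 : ℝ) ^ n / n.factorial := by
  rw [Polynomial.leadingCoeff, lagP_natDegree, lagP_coeff_self]

lemma lagP_ne_zero (α : ℝ) (n : ℕ) : lagP α n ≠ 0 := fun h => lagP_coeff_ne α n (by simp [h])

lemma negX_natDegree : (-Polynomial.X : Polynomial ℝ).natDegree = 1 := by simp

lemma comp_negX_degree (α : ℝ) (n : ℕ) :
    ((lagP α n).comp (-Polynomial.X)).degree = n := by
  have h1 : ((lagP α n).comp (-Polynomial.X)).natDegree = n := by
    rw [Polynomial.natDegree_comp, lagP_natDegree, negX_natDegree, mul_one]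
  have hne : (lagP α n).comp (-Polynomial.X) ≠ 0 := by
    intro h
    have := Polynomial.leadingCoeff_comp (p := lagP α n) (q := -Polynomial.X) (by rw [negX_natDegree]; norm_num)
    rw [h, Polynomial.leadingCoeff_zero, lagP_leadingCoeff] at this
    simp [Polynomial.leadingCoeff_neg] at this
    have : ((-1:ℝ)^n / n.factorial) * (-1)^n ≠ 0 := by positivity
    simp_all [lagP_natDegree]
  rw [Polynomial.degree_eq_natDegree hne, h1]

lemma comp_negX_leadingCoeff (α : ℝ) (n : ℕ) :
    ((lagP α n).comp (-Polynomial.X)).leadingCoeff = 1 / n.factorial := by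
  rw [Polynomial.leadingCoeff_comp (by rw [negX_natDegree]; norm_num), lagP_leadingCoeff,
    lagP_natDegree]
  have : (-Polynomial.X : Polynomial ℝ).leadingCoeff = -1 := by
    simp [Polynomial.leadingCoeff_neg]
  rw [this]
  rw [div_mul_eq_mul_div, ← pow_add, ← two_mul, pow_mul]
  norm_num


/-- the Type III exceptional X_m-Laguerre polynomial
`L_{m,n}^{III,α}(x) = x L_{n-m-2}^{α+2}(x) L_m^{-α-1}(-x) + (m+1) L_{n-m-1}^{α+1}(x) L_{m+1}^{-α-2}(-x)`
has degree exactly `n`; in particular its coefficient of `x^n` is nonzero. -/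
theorem typeIII_degree (α : ℝ) (m n : ℕ) (h : m + 1 ≤ n) :
    (Polynomial.X * lagPZ (α + 2) ((n : ℤ) - (m : ℤ) - 2) *
        ((lagP (-α - 1) m).comp (-Polynomial.X))
      + Polynomial.C ((m : ℝ) + 1) * lagP (α + 1) (n - m - 1) *
        ((lagP (-α - 2) (m + 1)).comp (-Polynomial.X))).degree = (n : WithBot ℕ)
    ∧ (Polynomial.X * lagPZ (α + 2) ((n : ℤ) - (m : ℤ) - 2) *
        ((lagP (-α - 1) m).comp (-Polynomial.X))
      + Polynomial.C ((m : ℝ) + 1) * lagP (α + 1) (n - m - 1) *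
        ((lagP (-α - 2) (m + 1)).comp (-Polynomial.X))).coeff n ≠ 0 := by
  set A := Polynomial.X * lagPZ (α + 2) ((n : ℤ) - (m : ℤ) - 2) *
        ((lagP (-α - 1) m).comp (-Polynomial.X)) with hA
  set B := Polynomial.C ((m : ℝ) + 1) * lagP (α + 1) (n - m - 1) *
        ((lagP (-α - 2) (m + 1)).comp (-Polynomial.X)) with hB
  have hBdeg : B.degree = (n : WithBot ℕ) := by
    rw [hB, Polynomial.degree_mul, Polynomial.degree_mul, Polynomial.degree_C (by positivity),
      lagP_degree, comp_negX_degree]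
    rw [zero_add, ← Nat.cast_add]
    congr 1
    omega
  have hAdeg : A.degree < (n : WithBot ℕ) := by
    rcases eq_or_lt_of_le h with heq | hlt
    · have : ((n : ℤ) - (m : ℤ) - 2) = -1 := by omega
      rw [hA, this]
      simp only [lagPZ]
      norm_num
    · have hz : (0 : ℤ) ≤ (n : ℤ) - (m : ℤ) - 2 := by omega
      have ht : ((n : ℤ) - (m : ℤ) - 2).toNat = n - m - 2 := by omega
      rw [hA]
      simp only [lagPZ, if_pos hz, ht]
      rw [Polynomial.degree_mul, Polynomial.degree_mul, Polynomial.degree_X, lagP_degree,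
        comp_negX_degree]
      have : (1 : WithBot ℕ) + (↑(n - m - 2)) + (↑m) = ((1 + (n - m - 2) + m : ℕ) : WithBot ℕ) := by
        push_cast; ring
      rw [this]
      have hlt2 : 1 + (n - m - 2) + m < n := by omega
      exact_mod_cast Nat.cast_lt.mpr hlt2
  have hAB : A.degree < B.degree := hBdeg ▸ hAdeg
  have hdeg : (A + B).degree = (n : WithBot ℕ) := by
    rw [Polynomial.degree_add_eq_right_of_degree_lt hAB, hBdeg]
  refine ⟨hdeg, ?_⟩
  have hAc : A.coeff n = 0 := Polynomial.coeff_eq_zero_of_degree_lt hAdeg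
  have hBn : B.natDegree = n := Polynomial.natDegree_eq_of_degree_eq_some hBdeg
  have hBc : B.coeff n ≠ 0 := by
    have : B.coeff n = B.leadingCoeff := by rw [Polynomial.leadingCoeff, hBn]
    rw [this, hB, Polynomial.leadingCoeff_mul, Polynomial.leadingCoeff_mul,
      Polynomial.leadingCoeff_C, lagP_leadingCoeff, comp_negX_leadingCoeff]
    positivity
  rw [Polynomial.coeff_add, hAc, zero_add]
  exact hBc
end

section
/- For any real α, positive integers m and k, the derivative of the Type III exceptional X_m-Laguerre polynomial factors as (L_{m,m+k}^{III,α}(x))' = (m+k)·L_{k-1}^{α+1}(x)·L_m^{-α-1}(-x). -/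
open Finset

/-- The Type III exceptional `X_m`-Laguerre polynomial of degree `m + k` (for `k ≥ 1`):
`L_{m,m+k}^{III,α}(x) = x L_{k-2}^{α+2}(x) L_m^{-α-1}(-x) + (m+1) L_{k-1}^{α+1}(x) L_{m+1}^{-α-2}(-x)`. -/
noncomputable def LIII (α : ℝ) (m k : ℕ) (x : ℝ) : ℝ :=
  x * lagZ (α + 2) ((k : ℤ) - 2) x * lag (-α - 1) m (-x)
    + ((m : ℝ) + 1) * lag (α + 1) (k - 1) x * lag (-α - 2) (m + 1) (-x)

open Polynomial

/-! With the convention `L_n^α = 0` for `n < 0`, both `(L_n^α)' = -L_{n-1}^{α+1}` and the Laguerre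
equation `x L_{n-2}^{α+2} - (α + 1 - x) L_{n-1}^{α+1} + n L_n^α = 0` (that is,
`x y'' + (α + 1 - x) y' + n y = 0` for `y = L_n^α`) hold for every integer `n`. Differentiating
`L^{III}` by the product rule and subtracting the Laguerre equations for `L_{k-1}^{α+1}(x)` and
`L_{m+1}^{-α-2}(-x)`, each multiplied by the other factor of its term, leaves exactly
`(m + k) L_{k-1}^{α+1}(x) L_m^{-α-1}(-x)`. -/

theorem Polynomial.coeff_X_mul_derivative {R : Type*} [Semiring R] (p : R[X]) (t : ℕ) :
    (X * derivative p).coeff t = t * p.coeff t := by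
  cases t with
  | zero => simp
  | succ s => rw [coeff_X_mul, coeff_derivative, ← Nat.cast_succ, Nat.cast_comm]

noncomputable def lagCoeff (α : ℝ) (n j : ℕ) : ℝ :=
  (-1 : ℝ) ^ j * (∏ i ∈ range (n - j), (α + (j : ℝ) + 1 + (i : ℝ))) /
    ((Nat.factorial (n - j) : ℝ) * (Nat.factorial j : ℝ))

noncomputable def lagPoly (α : ℝ) (n : ℕ) : ℝ[X] :=
  ∑ j ∈ range (n + 1), monomial j (lagCoeff α n j)

theorem eval_lagPoly (α : ℝ) (n : ℕ) (x : ℝ) : (lagPoly α n).eval x = lag α n x := by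
  simp [lag, lagPoly, lagCoeff, eval_finsetSum]

theorem coeff_lagPoly (α : ℝ) (n t : ℕ) :
    (lagPoly α n).coeff t = if t ≤ n then lagCoeff α n t else 0 := by
  simp [lagPoly, coeff_monomial]

theorem lagPoly_zero (α : ℝ) : lagPoly α 0 = 1 := by
  simp [lagPoly, lagCoeff]

theorem lagCoeff_succ_mul (α : ℝ) (j d : ℕ) :
    lagCoeff α (j + d + 1) (j + 1) * (j + 1) = -lagCoeff (α + 1) (j + d) j := by
  simp only [lagCoeff, show j + d + 1 - (j + 1) = d by omega, Nat.add_sub_cancel_left,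
    Nat.factorial_succ, show ∀ i : ℕ, α + ((j + 1 : ℕ) : ℝ) + 1 + i = α + 1 + j + 1 + i from
      fun i => by push_cast; ring]
  push_cast
  field_simp
  ring

theorem lagCoeff_ode (α : ℝ) (j d : ℕ) :
    (j + 1) * (α + j + 1) * lagCoeff α (j + d + 1) (j + 1)
      + (d + 1) * lagCoeff α (j + d + 1) j = 0 := by
  simp only [lagCoeff, show j + d + 1 - j = d + 1 by omega, show j + d + 1 - (j + 1) = d by omega,
    Nat.factorial_succ, prod_range_succ', show ∀ i : ℕ, α + ((j + 1 : ℕ) : ℝ) + 1 + i =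
      α + j + 1 + (i + 1 : ℕ) from fun i => by push_cast; ring]
  push_cast
  field_simp
  ring

theorem derivative_lagPoly_succ (α : ℝ) (n : ℕ) :
    derivative (lagPoly α (n + 1)) = -lagPoly (α + 1) n := by
  ext t
  rw [coeff_derivative, coeff_neg, coeff_lagPoly, coeff_lagPoly]
  by_cases ht : t ≤ n
  · obtain ⟨d, rfl⟩ := Nat.exists_eq_add_of_le ht
    rw [if_pos (by omega), if_pos ht]
    exact_mod_cast lagCoeff_succ_mul α t d
  · rw [if_neg (by omega), if_neg ht, zero_mul, neg_zero]

theorem lagPoly_ode (α : ℝ) (n : ℕ) :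
    X * derivative (derivative (lagPoly α n)) + (C (α + 1) - X) * derivative (lagPoly α n)
      + C (n : ℝ) * lagPoly α n = 0 := by
  ext t
  simp only [coeff_add, sub_mul, coeff_sub, coeff_C_mul, coeff_X_mul_derivative,
    coeff_derivative, coeff_zero, coeff_lagPoly]
  rcases lt_trichotomy t n with ht | rfl | ht
  · obtain ⟨d, rfl⟩ := Nat.exists_eq_add_of_lt ht
    rw [if_pos (by omega), if_pos (by omega)]
    push_cast
    linear_combination lagCoeff_ode α t d
  · rw [if_neg (by omega)]
    ring
  · rw [if_neg (by omega), if_neg (by omega)]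
    ring

noncomputable def lagPolyZ (α : ℝ) (n : ℤ) : ℝ[X] :=
  if 0 ≤ n then lagPoly α n.toNat else 0

theorem eval_lagPolyZ (α : ℝ) (n : ℤ) (x : ℝ) : (lagPolyZ α n).eval x = lagZ α n x := by
  unfold lagPolyZ lagZ
  split_ifs <;> simp [eval_lagPoly]

theorem lagPolyZ_natCast (α : ℝ) (n : ℕ) : lagPolyZ α n = lagPoly α n := by
  simp [lagPolyZ]

theorem lagPolyZ_of_neg {n : ℤ} (α : ℝ) (hn : n < 0) : lagPolyZ α n = 0 := by
  simp [lagPolyZ, hn.not_ge]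

theorem derivative_lagPolyZ (α : ℝ) (n : ℤ) :
    derivative (lagPolyZ α n) = -lagPolyZ (α + 1) (n - 1) := by
  rcases lt_trichotomy n 0 with hn | rfl | hn
  · rw [lagPolyZ_of_neg α hn, lagPolyZ_of_neg _ (by omega), derivative_zero, neg_zero]
  · simp [lagPolyZ, lagPoly_zero]
  · obtain ⟨k, rfl⟩ : ∃ k : ℕ, n = k + 1 := ⟨n.toNat - 1, by omega⟩
    rw [add_sub_cancel_right, ← Nat.cast_succ, lagPolyZ_natCast, lagPolyZ_natCast,
      derivative_lagPoly_succ]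

theorem lagPolyZ_ode (α : ℝ) (n : ℤ) :
    X * lagPolyZ (α + 2) (n - 2) - (C (α + 1) - X) * lagPolyZ (α + 1) (n - 1)
      + C (n : ℝ) * lagPolyZ α n = 0 := by
  rcases lt_or_ge n 0 with hn | hn
  · simp [lagPolyZ_of_neg _ hn, lagPolyZ_of_neg _ (show n - 1 < 0 by omega),
      lagPolyZ_of_neg _ (show n - 2 < 0 by omega)]
  · lift n to ℕ using hn
    have h := lagPoly_ode α n
    rw [← lagPolyZ_natCast, derivative_lagPolyZ, derivative_neg, derivative_lagPolyZ,
      show α + 1 + 1 = α + 2 by ring, show (n : ℤ) - 1 - 1 = n - 2 by ring] at h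
    push_cast
    linear_combination h

theorem hasDerivAt_lagZ (α : ℝ) (n : ℤ) (x : ℝ) :
    HasDerivAt (lagZ α n) (-lagZ (α + 1) (n - 1) x) x := by
  simpa only [derivative_lagPolyZ, eval_neg, eval_lagPolyZ] using (lagPolyZ α n).hasDerivAt x

theorem hasDerivAt_lagZ_neg (α : ℝ) (n : ℤ) (x : ℝ) :
    HasDerivAt (fun y => lagZ α n (-y)) (lagZ (α + 1) (n - 1) (-x)) x := by
  simpa [Function.comp_def] using (hasDerivAt_lagZ α n (-x)).comp x (hasDerivAt_neg x)

theorem lagZ_ode (α : ℝ) (n : ℤ) (x : ℝ) :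
    x * lagZ (α + 2) (n - 2) x - (α + 1 - x) * lagZ (α + 1) (n - 1) x + n * lagZ α n x = 0 := by
  simpa [eval_lagPolyZ] using congrArg (eval x) (lagPolyZ_ode α n)

theorem lagZ_natCast (α : ℝ) (n : ℕ) (x : ℝ) : lagZ α n x = lag α n x := by
  simp [lagZ]

theorem LIII_eq_lagZ (α : ℝ) (m k : ℕ) (hk : 0 < k) :
    LIII α m k = fun y => y * lagZ (α + 2) (k - 2) y * lagZ (-α - 1) m (-y)
      + (m + 1) * lagZ (α + 1) (k - 1) y * lagZ (-α - 2) (m + 1) (-y) := by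
  funext y
  rw [LIII, show (k : ℤ) - 1 = (k - 1 : ℕ) by omega, show (m : ℤ) + 1 = (m + 1 : ℕ) by omega,
    lagZ_natCast, lagZ_natCast, lagZ_natCast]

theorem typeIII_deriv_general (α : ℝ) (m k : ℕ) (hk : 0 < k) (x : ℝ) :
    deriv (LIII α m k) x = ((m : ℝ) + (k : ℝ)) * lag (α + 1) (k - 1) x * lag (-α - 1) m (-x) := by
  have hA := hasDerivAt_lagZ (α + 2) (k - 2) x
  have hB := hasDerivAt_lagZ_neg (-α - 1) m x
  have hC := hasDerivAt_lagZ (α + 1) (k - 1) x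
  have hD := hasDerivAt_lagZ_neg (-α - 2) (m + 1) x
  have hLIII := (((hasDerivAt_id' x).fun_mul hA).fun_mul hB).fun_add
    ((hC.const_mul ((m : ℝ) + 1)).fun_mul hD)
  rw [LIII_eq_lagZ α m k hk, hLIII.deriv, ← lagZ_natCast, ← lagZ_natCast,
    show ((k - 1 : ℕ) : ℤ) = k - 1 by omega]
  -- `ring_nf` also normalizes the shifted indices inside `lagZ`, matching both sides' atoms.
  linear_combination (norm := (push_cast; ring_nf))
    -lagZ (-α - 1) m (-x) * lagZ_ode (α + 1) (k - 1) x
      - lagZ (α + 2) (k - 2) x * lagZ_ode (-α - 2) (m + 1) (-x)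

/-- `(L_{m,m+k}^{III,α}(x))' = (m+k) L_{k-1}^{α+1}(x) L_m^{-α-1}(-x)`. -/
theorem typeIII_deriv (α : ℝ) (m k : ℕ) (hm : 0 < m) (hk : 0 < k) (x : ℝ) :
    deriv (LIII α m k) x = ((m : ℝ) + (k : ℝ)) * lag (α + 1) (k - 1) x * lag (-α - 1) m (-x) :=
  typeIII_deriv_general α m k hk x
end

section
/- For any real α with -1 < α < 0, positive integers m and k, the value of the Type III exceptional X_m-Laguerre polynomial at the origin is strictly negative: L_{m,m+k}^{III,α}(0) < 0. -/
open Finset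

lemma lag_zero (α : ℝ) (n : ℕ) :
    lag α n 0 = (∏ j ∈ range n, (α + 1 + j)) / n.factorial := by
  rw [lag, sum_eq_single 0]
  · simp
  · intro i _ hi
    simp [zero_pow hi]
  · simp

lemma lag_zero_pos {α : ℝ} (hα : -1 < α) (n : ℕ) : 0 < lag α n 0 := by
  rw [lag_zero]
  refine div_pos (prod_pos fun j _ => ?_) (by positivity)
  linarith [(j.cast_nonneg : (0 : ℝ) ≤ j)]

/-- Only the first factor `α + 1` of `∏ (α + 1 + j)` is negative. -/
lemma lag_succ_zero_neg {α : ℝ} (hα1 : -2 < α) (hα2 : α < -1) (n : ℕ) :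
    lag α (n + 1) 0 < 0 := by
  rw [lag_zero, prod_range_succ']
  refine div_neg_of_neg_of_pos (mul_neg_of_pos_of_neg (prod_pos fun j _ => ?_) ?_) (by positivity)
  · push_cast
    linarith [(j.cast_nonneg : (0 : ℝ) ≤ j)]
  · simp only [CharP.cast_eq_zero, add_zero]
    linarith

lemma LIII_zero (α : ℝ) (m k : ℕ) :
    LIII α m k 0 = (m + 1) * lag (α + 1) (k - 1) 0 * lag (-α - 2) (m + 1) 0 := by
  simp [LIII]

theorem typeIII_neg_at_zero_general (α : ℝ) (hα1 : -1 < α) (hα2 : α < 0) (m k : ℕ) :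
    LIII α m k 0 < 0 := by
  rw [LIII_zero]
  have hfirst : 0 < lag (α + 1) (k - 1) 0 := lag_zero_pos (by linarith) _
  have hsecond : lag (-α - 2) (m + 1) 0 < 0 := lag_succ_zero_neg (by linarith) (by linarith) m
  exact mul_neg_of_pos_of_neg (mul_pos (by positivity) hfirst) hsecond

/-- for `-1 < α < 0` the Type III exceptional `X_m`-Laguerre polynomial is
strictly negative at the origin. -/
theorem typeIII_neg_at_zero (α : ℝ) (hα1 : -1 < α) (hα2 : α < 0) (m k : ℕ)
    (hm : 0 < m) (hk : 0 < k) :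
    LIII α m k 0 < 0 :=
  typeIII_neg_at_zero_general α hα1 hα2 m k
end

section
/- Let α > 0 and m a positive integer. The Type I exceptional X_m-Laguerre differential expression ℓ_m^{I,α}[y](x) = -x y'' + (x - α - 1 + 2x·(L_m^{α-1}(-x))'/L_m^{α-1}(-x))·y' + (2α·(L_m^{α-1}(-x))'/L_m^{α-1}(-x) - m)·y satisfies ℓ_m^{I,α}[x^{-α}] = (-m - α)·x^{-α} for all x > 0. -/
open Finset

/-!
Both Laguerre terms are multiplied by `2 (L_m^{α-1}(-x))' / L_m^{α-1}(-x)` and combine to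
`x y' + α y`, which vanishes for `y = x^{-α}` by Euler's identity for homogeneous functions.
What remains, `-x y'' + (x - α - 1) y' - m y`, equals `x y' - m y = -(m + α) y`
because differentiating Euler's identity gives `x y'' = -(α + 1) y'`.
-/

theorem mul_deriv_rpow_const {x : ℝ} (hx : x ≠ 0) (p : ℝ) :
    x * deriv (fun t : ℝ => t ^ p) x = p * x ^ p := by
  rw [Real.deriv_rpow_const, Real.rpow_sub_one hx]
  field_simp

theorem mul_deriv_deriv_rpow_const {x : ℝ} (hx : x ≠ 0) (p : ℝ) :
    x * deriv (deriv fun t : ℝ => t ^ p) x = (p - 1) * deriv (fun t : ℝ => t ^ p) x := by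
  rw [Real.deriv_rpow_const', deriv_const_mul_field', mul_left_comm,
    mul_deriv_rpow_const hx]
  ring

theorem typeI_power_eigenfunction_general (α : ℝ) (m : ℕ)
    (x : ℝ) (hx : 0 < x) :
    -x * deriv (deriv (fun t : ℝ => t ^ (-α))) x
      + (x - α - 1 + 2 * x * (deriv (fun t => lag (α - 1) m (-t)) x / lag (α - 1) m (-x)))
          * deriv (fun t : ℝ => t ^ (-α)) x
      + (2 * α * (deriv (fun t => lag (α - 1) m (-t)) x / lag (α - 1) m (-x)) - (m : ℝ))
          * x ^ (-α)
    = (-(m : ℝ) - α) * x ^ (-α) := by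
  set logDeriv := deriv (fun t => lag (α - 1) m (-t)) x / lag (α - 1) m (-x)
  have euler := mul_deriv_rpow_const hx.ne' (-α)
  have euler₂ := mul_deriv_deriv_rpow_const hx.ne' (-α)
  linear_combination (1 + 2 * logDeriv) * euler - euler₂

/-- `x^{-α}` is an eigenfunction of the Type I exceptional
`X_m`-Laguerre expression with eigenvalue `-m-α`, for `α > 0` and `x > 0`. -/
theorem typeI_power_eigenfunction (α : ℝ) (hα : 0 < α) (m : ℕ) (hm : 0 < m)
    (x : ℝ) (hx : 0 < x) :
    -x * deriv (deriv (fun t : ℝ => t ^ (-α))) x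
      + (x - α - 1 + 2 * x * (deriv (fun t => lag (α - 1) m (-t)) x / lag (α - 1) m (-x)))
          * deriv (fun t : ℝ => t ^ (-α)) x
      + (2 * α * (deriv (fun t => lag (α - 1) m (-t)) x / lag (α - 1) m (-x)) - (m : ℝ))
          * x ^ (-α)
    = (-(m : ℝ) - α) * x ^ (-α) :=
  typeI_power_eigenfunction_general α m x hx
end

section
/- Let α be real, m a positive integer, and suppose L_m^{α-1}(-x) ≠ 0 for all x > 0. Define ℓ_m^{I,α}[z] = -x z'' + (x - α - 1 + 2x·(log L_m^{α-1}(-x))')·z' + (2α·(log L_m^{α-1}(-x))' - m)·z and ℓ_m^{III,-α}[y] = -x y'' + (-1 + α + x + 2x·(log L_m^{α-1}(-x))')·y' + (-m - α)·y. Then for every twice differentiable function y on (0,∞), setting z(x) = x^{-α}·y(x), one has ℓ_m^{I,α}[z](x) = x^{-α}·ℓ_m^{III,-α}[y](x) for all x > 0. -/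
open Finset

open Filter Topology

/-! The substitution `z = x^{-α} y` gives `z' = x^{-α} (y' - α y / x)` and
`z'' = x^{-α} (y'' - 2α y' / x + α(α+1) y / x²)`. Inserting these into `ℓ_m^{I,α}[z]`, the
terms in `y / x` cancel and the first-order coefficient shifts by `2α`, which is exactly
`x^{-α} ℓ_m^{III,-α}[y]`. -/

lemma deriv_rpow_mul {p x : ℝ} {y : ℝ → ℝ} (hx : 0 < x) (hy : DifferentiableAt ℝ y x) :
    deriv (fun t => t ^ p * y t) x = x ^ p * (deriv y x + p / x * y x) := by
  have h : HasDerivAt (fun t => t ^ p * y t) (p * x ^ (p - 1) * y x + x ^ p * deriv y x) x :=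
    (Real.hasDerivAt_rpow_const (Or.inl hx.ne')).mul hy.hasDerivAt
  rw [h.deriv, Real.rpow_sub_one hx.ne']
  field_simp
  ring

lemma deriv_deriv_rpow_mul {p x : ℝ} {y : ℝ → ℝ} (hx : 0 < x)
    (hy : ∀ᶠ t in 𝓝 x, DifferentiableAt ℝ y t) (hy' : DifferentiableAt ℝ (deriv y) x) :
    deriv (deriv fun t => t ^ p * y t) x
      = x ^ p * (deriv (deriv y) x + 2 * p / x * deriv y x + p * (p - 1) / x ^ 2 * y x) := by
  have hz' : deriv (fun t => t ^ p * y t) =ᶠ[𝓝 x] fun t => t ^ p * (deriv y t + p / t * y t) := by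
    filter_upwards [hy, eventually_gt_nhds hx] with t hyt ht using deriv_rpow_mul ht hyt
  have hw : HasDerivAt (fun t => deriv y t + p / t * y t)
      (deriv (deriv y) x + ((0 * x - p * 1) / x ^ 2 * y x + p / x * deriv y x)) x :=
    hy'.hasDerivAt.add
      (((hasDerivAt_const x p).div (hasDerivAt_id x) hx.ne').mul hy.self_of_nhds.hasDerivAt)
  rw [hz'.deriv_eq, deriv_rpow_mul hx hw.differentiableAt, hw.deriv]
  field_simp
  ring

theorem typeI_typeIII_gauge_general (α : ℝ) (m : ℕ)
    (y : ℝ → ℝ)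
    (hy : ∀ x > (0 : ℝ), DifferentiableAt ℝ y x)
    (hy' : ∀ x > (0 : ℝ), DifferentiableAt ℝ (deriv y) x)
    (x : ℝ) (hx : 0 < x) :
    -x * deriv (deriv (fun t : ℝ => t ^ (-α) * y t)) x
      + (x - α - 1 + 2 * x * (deriv (fun t => lag (α - 1) m (-t)) x / lag (α - 1) m (-x)))
          * deriv (fun t : ℝ => t ^ (-α) * y t) x
      + (2 * α * (deriv (fun t => lag (α - 1) m (-t)) x / lag (α - 1) m (-x)) - (m : ℝ))
          * (x ^ (-α) * y x)
    = x ^ (-α) *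
        (-x * deriv (deriv y) x
          + (-1 + α + x
              + 2 * x * (deriv (fun t => lag (α - 1) m (-t)) x / lag (α - 1) m (-x)))
              * deriv y x
          + (-(m : ℝ) - α) * y x) := by
  rw [deriv_deriv_rpow_mul hx ((eventually_gt_nhds hx).mono hy) (hy' x hx),
    deriv_rpow_mul hx (hy x hx)]
  field_simp
  ring

/-- the gauge transformation `z(x) = x^{-α} y(x)` relates the Type I
exceptional `X_m`-Laguerre expression `ℓ_m^{I,α}` to the Type III expression
`ℓ_m^{III,-α}`: `ℓ_m^{I,α}[z](x) = x^{-α} ℓ_m^{III,-α}[y](x)` on `(0,∞)`. -/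
theorem typeI_typeIII_gauge (α : ℝ) (m : ℕ) (hm : 0 < m)
    (hL : ∀ x > (0 : ℝ), lag (α - 1) m (-x) ≠ 0)
    (y : ℝ → ℝ)
    (hy : ∀ x > (0 : ℝ), DifferentiableAt ℝ y x)
    (hy' : ∀ x > (0 : ℝ), DifferentiableAt ℝ (deriv y) x)
    (x : ℝ) (hx : 0 < x) :
    -x * deriv (deriv (fun t : ℝ => t ^ (-α) * y t)) x
      + (x - α - 1 + 2 * x * (deriv (fun t => lag (α - 1) m (-t)) x / lag (α - 1) m (-x)))
          * deriv (fun t : ℝ => t ^ (-α) * y t) x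
      + (2 * α * (deriv (fun t => lag (α - 1) m (-t)) x / lag (α - 1) m (-x)) - (m : ℝ))
          * (x ^ (-α) * y x)
    = x ^ (-α) *
        (-x * deriv (deriv y) x
          + (-1 + α + x
              + 2 * x * (deriv (fun t => lag (α - 1) m (-t)) x / lag (α - 1) m (-x)))
              * deriv y x
          + (-(m : ℝ) - α) * y x) :=
  typeI_typeIII_gauge_general α m y hy hy' x hx
end

section
/- Let α > -1 and let η be a real polynomial with η(x) ≠ 0 for all x ≥ 0. Then the set {η·p : p a polynomial} is dense in the Hilbert space L²((0,∞); x^α e^{-x} dx). -/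
/-!
Let `g ∈ L²(μ)` be orthogonal to every `η · xⁿ`, and put `h = η g`. Then all moments of `h`
vanish, and `xⁿ e^{cx} h` is integrable for `c = 1/4` because `xⁿ e^{cx} η ∈ L²(μ)`.
Expanding `e^{-cx}` in its power series and integrating termwise (the series is dominated by
`e^{cx}`) gives inductively `∫ xⁿ e^{-kcx} h dμ = 0` for all `k`, i.e. `∫ P(e^{-cx}) h dμ = 0`
for every polynomial `P`. By Weierstrass on `[0, 1]` this extends to every continuous `ψ` in
place of `P`, and every compactly supported test function is of the form `ψ(e^{-cx})`; hence
`h = 0` a.e., and since `η` has no zeros on `(0, ∞)`, `g = 0`.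
-/

open MeasureTheory

/-- The Laguerre-type measure `x^α e^{-x} dx` on `(0,∞)`. -/
noncomputable def laguerreMeasure (α : ℝ) : Measure ℝ :=
  (volume.restrict (Set.Ioi (0 : ℝ))).withDensity
    (fun x => ENNReal.ofReal (x ^ α * Real.exp (-x)))

open Filter Polynomial Real Set
open scoped ENNReal Nat

theorem ae_eq_zero_of_integral_comp_exp_neg_mul_mul_eq_zero {μ : Measure ℝ} {f : ℝ → ℝ}
    {c : ℝ} (hc : 0 < c) (hf : LocallyIntegrable f μ)
    (h : ∀ ψ : ℝ → ℝ, Continuous ψ → ∫ x, ψ (exp (-c * x)) * f x ∂μ = 0) :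
    ∀ᵐ x ∂μ, f x = 0 := by
  refine ae_eq_zero_of_integral_contDiff_smul_eq_zero hf fun χ hχ hχc => ?_
  set ψ : ℝ → ℝ := Function.update (fun y => χ (-log y / c)) 0 0
  have hψ : Continuous ψ := continuous_iff_continuousAt.2 fun y => by
    rcases eq_or_ne y 0 with rfl | hy
    · rw [continuousAt_update_same]
      exact hχc.is_zero_at_infty.comp <| (tendsto_neg_atBot_atTop.comp
        tendsto_log_nhdsNE_zero).atTop_div_const hc |>.mono_right atTop_le_cocompact
    · rw [continuousAt_update_of_ne hy]
      exact hχ.continuous.continuousAt.comp ((continuousAt_log hy).neg.div_const c)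
  have hψχ (x : ℝ) : ψ (exp (-c * x)) = χ x := by
    simp only [ψ, Function.update_of_ne (exp_pos _).ne', log_exp]
    field_simp
  simpa only [hψχ, smul_eq_mul] using h ψ hψ

section Moments

variable {μ : Measure ℝ} {f : ℝ → ℝ} {c : ℝ}

theorem integrable_pow_mul_exp_neg_mul_mul (hμ : ∀ᵐ x ∂μ, 0 ≤ x)
    (hf : ∀ n : ℕ, Integrable (fun x => x ^ n * exp (c * x) * f x) μ) (n : ℕ) {t : ℝ}
    (ht : -c ≤ t) : Integrable (fun x => x ^ n * exp (-t * x) * f x) μ := by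
  have hbdd : ∀ᵐ x ∂μ, ‖exp (-(t + c) * x)‖ ≤ 1 := by
    filter_upwards [hμ] with x hx
    rw [norm_of_nonneg (exp_pos _).le, exp_le_one_iff]
    nlinarith
  refine ((hf n).bdd_mul (by fun_prop) hbdd).congr (Eventually.of_forall fun x => ?_)
  beta_reduce
  rw [show -t * x = -(t + c) * x + c * x by ring, exp_add]
  ring

theorem integrable_of_integrable_pow_mul_exp_mul (hc : 0 ≤ c) (hμ : ∀ᵐ x ∂μ, 0 ≤ x)
    (hf : ∀ n : ℕ, Integrable (fun x => x ^ n * exp (c * x) * f x) μ) : Integrable f μ := by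
  simpa using integrable_pow_mul_exp_neg_mul_mul hμ hf 0 (neg_nonpos.2 hc)

theorem integral_pow_mul_exp_neg_add_mul_eq_zero (hc : 0 ≤ c) (hμ : ∀ᵐ x ∂μ, 0 ≤ x)
    (hf : ∀ n : ℕ, Integrable (fun x => x ^ n * exp (c * x) * f x) μ) {t : ℝ} (ht : 0 ≤ t)
    (h : ∀ n : ℕ, ∫ x, x ^ n * exp (-t * x) * f x ∂μ = 0) (n : ℕ) :
    ∫ x, x ^ n * exp (-(t + c) * x) * f x ∂μ = 0 := by
  set F : ℕ → ℝ → ℝ := fun k x => (-c) ^ k / k ! * (x ^ (n + k) * exp (-t * x) * f x)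
  have hF : ∀ k x, F k x = (-(c * x)) ^ k / k ! * (x ^ n * exp (-t * x) * f x) := by
    intro k x
    simp only [F]
    ring
  have hexp (y : ℝ) : HasSum (fun k : ℕ => y ^ k / k !) (exp y) :=
    exp_eq_exp_ℝ ▸ NormedSpace.expSeries_div_hasSum_exp y
  -- The series of absolute values sums to `xⁿ e^{(c - t) x} |f x|`, integrable as `-c ≤ t - c`.
  have hsum : HasSum (fun k => ∫ x, F k x ∂μ) (∫ x, x ^ n * exp (-(t + c) * x) * f x ∂μ) := by
    refine hasSum_integral_of_dominated_convergence
      (fun k x => (c * x) ^ k / k ! * ‖x ^ n * exp (-t * x) * f x‖) (fun k => ?meas)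
      (fun k => ?bound) (Eventually.of_forall fun x => ?summable) ?integrable
      (Eventually.of_forall fun x => ?lim)
    case meas =>
      exact ((integrable_pow_mul_exp_neg_mul_mul hμ hf (n + k) (by linarith)).const_mul
        _).aestronglyMeasurable
    case bound =>
      filter_upwards [hμ] with x hx
      rw [hF, norm_mul, norm_div, norm_pow, norm_neg, norm_of_nonneg (mul_nonneg hc hx),
        norm_of_nonneg (Nat.cast_nonneg _)]
    case summable => exact (hexp (c * x)).summable.mul_right _
    case integrable =>
      refine (integrable_pow_mul_exp_neg_mul_mul hμ hf n (t := t - c) (by linarith)).norm.congr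
        (Eventually.of_forall fun x => ?_)
      simp only [tsum_mul_right, (hexp _).tsum_eq, norm_mul, norm_of_nonneg (exp_pos _).le]
      rw [show -(t - c) * x = c * x + -t * x by ring, exp_add]
      ring
    case lim =>
      have hsplit : x ^ n * exp (-(t + c) * x) * f x
          = exp (-(c * x)) * (x ^ n * exp (-t * x) * f x) := by
        rw [show -(t + c) * x = -(c * x) + -t * x by ring, exp_add]
        ring
      simpa only [hF, hsplit] using (hexp _).mul_right (x ^ n * exp (-t * x) * f x)
  have hzero : ∀ k, ∫ x, F k x ∂μ = 0 := fun k => by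
    simp only [F, integral_const_mul, h, mul_zero]
  simp only [hzero] at hsum
  exact hsum.unique hasSum_zero

theorem integral_pow_mul_exp_neg_nat_mul_mul_eq_zero (hc : 0 ≤ c) (hμ : ∀ᵐ x ∂μ, 0 ≤ x)
    (hf : ∀ n : ℕ, Integrable (fun x => x ^ n * exp (c * x) * f x) μ)
    (hmom : ∀ n : ℕ, ∫ x, x ^ n * f x ∂μ = 0) (k n : ℕ) :
    ∫ x, x ^ n * exp (-(k * c) * x) * f x ∂μ = 0 := by
  induction k generalizing n with
  | zero => simpa using hmom n
  | succ k ih =>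
    rw [Nat.cast_succ, add_one_mul]
    exact integral_pow_mul_exp_neg_add_mul_eq_zero hc hμ hf (by positivity) ih n

theorem integrable_comp_exp_neg_mul_mul (hc : 0 ≤ c) (hμ : ∀ᵐ x ∂μ, 0 ≤ x)
    (hf : ∀ n : ℕ, Integrable (fun x => x ^ n * exp (c * x) * f x) μ) {ψ : ℝ → ℝ}
    (hψ : Continuous ψ) : Integrable (fun x => ψ (exp (-c * x)) * f x) μ := by
  obtain ⟨C, hC⟩ := isCompact_Icc.exists_bound_of_continuousOn (hψ.continuousOn (s := Icc 0 1))
  refine (integrable_of_integrable_pow_mul_exp_mul hc hμ hf).bdd_mul (c := C) (by fun_prop) ?_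
  filter_upwards [hμ] with x hx
  exact hC _ ⟨(exp_pos _).le, exp_le_one_iff.2 (by nlinarith)⟩

theorem integral_eval_exp_neg_mul_mul_eq_zero (hc : 0 ≤ c) (hμ : ∀ᵐ x ∂μ, 0 ≤ x)
    (hf : ∀ n : ℕ, Integrable (fun x => x ^ n * exp (c * x) * f x) μ)
    (hmom : ∀ n : ℕ, ∫ x, x ^ n * f x ∂μ = 0) (P : ℝ[X]) :
    ∫ x, P.eval (exp (-c * x)) * f x ∂μ = 0 := by
  induction P using Polynomial.induction_on' with
  | add p q hp hq =>
    simp only [eval_add, add_mul]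
    rw [integral_add (integrable_comp_exp_neg_mul_mul hc hμ hf p.continuous)
      (integrable_comp_exp_neg_mul_mul hc hμ hf q.continuous), hp, hq, add_zero]
  | monomial k a =>
    have h := integral_pow_mul_exp_neg_nat_mul_mul_eq_zero hc hμ hf hmom k 0
    have hpow (x : ℝ) : exp (-c * x) ^ k = exp (-(k * c) * x) := by
      rw [← exp_nat_mul]
      ring_nf
    simp only [pow_zero, one_mul] at h
    simp only [eval_monomial, hpow, mul_assoc, integral_const_mul, h, mul_zero]

theorem integral_comp_exp_neg_mul_mul_eq_zero (hc : 0 ≤ c) (hμ : ∀ᵐ x ∂μ, 0 ≤ x)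
    (hf : ∀ n : ℕ, Integrable (fun x => x ^ n * exp (c * x) * f x) μ)
    (hmom : ∀ n : ℕ, ∫ x, x ^ n * f x ∂μ = 0) {ψ : ℝ → ℝ} (hψ : Continuous ψ) :
    ∫ x, ψ (exp (-c * x)) * f x ∂μ = 0 := by
  have hf₀ := integrable_of_integrable_pow_mul_exp_mul hc hμ hf
  set K := ∫ x, ‖f x‖ ∂μ
  have hK : 0 ≤ K := integral_nonneg fun _ => norm_nonneg _
  refine eq_of_forall_dist_le fun ε hε => ?_
  obtain ⟨p, hp⟩ := exists_polynomial_near_of_continuousOn 0 1 ψ hψ.continuousOn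
    (ε / (K + 1)) (by positivity)
  have hdiff : ∫ x, (ψ (exp (-c * x)) - p.eval (exp (-c * x))) * f x ∂μ
      = ∫ x, ψ (exp (-c * x)) * f x ∂μ := by
    simp_rw [sub_mul]
    rw [integral_sub (integrable_comp_exp_neg_mul_mul hc hμ hf hψ)
      (integrable_comp_exp_neg_mul_mul hc hμ hf p.continuous),
      integral_eval_exp_neg_mul_mul_eq_zero hc hμ hf hmom, sub_zero]
  have hbound : ∀ᵐ x ∂μ, ‖(ψ (exp (-c * x)) - p.eval (exp (-c * x))) * f x‖
      ≤ ε / (K + 1) * ‖f x‖ := by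
    filter_upwards [hμ] with x hx
    rw [norm_mul, norm_sub_rev]
    gcongr
    exact (hp _ ⟨(exp_pos _).le, exp_le_one_iff.2 (by nlinarith)⟩).le
  calc dist (∫ x, ψ (exp (-c * x)) * f x ∂μ) 0
      ≤ ∫ x, ε / (K + 1) * ‖f x‖ ∂μ := by
        rw [dist_zero_right, ← hdiff]
        exact norm_integral_le_of_norm_le (hf₀.norm.const_mul _) hbound
    _ = ε * (K / (K + 1)) := by rw [integral_const_mul]; ring
    _ ≤ ε := mul_le_of_le_one_right hε.le ((div_le_one (by positivity)).2 (by linarith))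

theorem ae_eq_zero_of_integral_pow_mul_eq_zero (hc : 0 < c) (hμ : ∀ᵐ x ∂μ, 0 ≤ x)
    (hf : ∀ n : ℕ, Integrable (fun x => x ^ n * exp (c * x) * f x) μ)
    (hmom : ∀ n : ℕ, ∫ x, x ^ n * f x ∂μ = 0) : ∀ᵐ x ∂μ, f x = 0 :=
  ae_eq_zero_of_integral_comp_exp_neg_mul_mul_eq_zero hc
    (integrable_of_integrable_pow_mul_exp_mul hc.le hμ hf).locallyIntegrable
    fun _ hψ => integral_comp_exp_neg_mul_mul_eq_zero hc.le hμ hf hmom hψ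

end Moments

def polynomialMultiples (μ : Measure ℝ) (r : ℝ≥0∞) (η : ℝ[X]) :
    Submodule ℝ (Lp ℝ r μ) where
  carrier := {f | ∃ p : ℝ[X], ∀ᵐ x ∂μ, f x = Polynomial.eval x (η * p)}
  add_mem' := by
    rintro f g ⟨p, hp⟩ ⟨q, hq⟩
    refine ⟨p + q, ?_⟩
    filter_upwards [hp, hq, Lp.coeFn_add f g] with x hpx hqx hfg
    rw [hfg, Pi.add_apply, hpx, hqx, mul_add, eval_add]
  zero_mem' := ⟨0, by
    filter_upwards [Lp.coeFn_zero ℝ r μ] with x hx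
    rw [hx, mul_zero, eval_zero, Pi.zero_apply]⟩
  smul_mem' := by
    rintro a f ⟨p, hp⟩
    refine ⟨C a * p, ?_⟩
    filter_upwards [hp, Lp.coeFn_smul a f] with x hpx hx
    rw [hx, Pi.smul_apply, hpx, smul_eq_mul, eval_mul, eval_mul, eval_mul, eval_C, mul_left_comm]

theorem integral_pow_mul_eq_zero_of_mem_orthogonal {μ : Measure ℝ}
    (hpoly : ∀ q : ℝ[X], MemLp (fun x => q.eval x) 2 μ) {η : ℝ[X]} {g : Lp ℝ 2 μ}
    (hg : g ∈ (polynomialMultiples μ 2 η)ᗮ) (n : ℕ) :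
    ∫ x, x ^ n * (η.eval x * g x) ∂μ = 0 := by
  have hq := hpoly (η * X ^ n)
  have hmem : hq.toLp _ ∈ polynomialMultiples μ 2 η := ⟨X ^ n, hq.coeFn_toLp⟩
  rw [← Submodule.inner_right_of_mem_orthogonal hmem hg, L2.inner_def]
  refine integral_congr_ae ?_
  filter_upwards [hq.coeFn_toLp] with x hx
  rw [hx, RCLike.inner_apply, conj_trivial, eval_mul, eval_pow, eval_X]
  ring

theorem laguerreMeasure_ae_pos (α : ℝ) : ∀ᵐ x ∂laguerreMeasure α, 0 < x :=
  (withDensity_absolutelyContinuous _ _).ae_le (ae_restrict_mem measurableSet_Ioi)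

theorem integrable_laguerreMeasure_iff {α : ℝ} {g : ℝ → ℝ} :
    Integrable g (laguerreMeasure α) ↔
      IntegrableOn (fun x => g x * (x ^ α * exp (-x))) (Ioi 0) := by
  rw [laguerreMeasure, integrable_withDensity_iff (by fun_prop)
    (Eventually.of_forall fun _ => ENNReal.ofReal_lt_top)]
  refine integrableOn_congr_fun (fun x hx => ?_) measurableSet_Ioi
  rw [ENNReal.toReal_ofReal (mul_nonneg (rpow_nonneg (le_of_lt hx) _) (exp_pos _).le)]

theorem integrableOn_Ioi_eval_mul_rpow_mul_exp_neg_mul (q : ℝ[X]) {s b : ℝ} (hs : -1 < s)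
    (hb : 0 < b) : IntegrableOn (fun x => q.eval x * (x ^ s * exp (-b * x))) (Ioi 0) := by
  induction q using Polynomial.induction_on' with
  | add p q hp hq =>
    refine (hp.add hq).congr_fun (fun x _ => ?_) measurableSet_Ioi
    simp only [Pi.add_apply, eval_add, add_mul]
  | monomial n a =>
    have h : IntegrableOn (fun x => a * (x ^ (s + n) * exp (-b * x ^ (1 : ℝ)))) (Ioi 0) :=
      (integrableOn_rpow_mul_exp_neg_mul_rpow (by linarith [n.cast_nonneg (α := ℝ)]) one_pos
        hb).const_mul a
    refine h.congr_fun (fun x hx => ?_) measurableSet_Ioi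
    beta_reduce
    rw [rpow_one, rpow_add hx, rpow_natCast, eval_monomial]
    ring

theorem memLp_laguerreMeasure_eval_mul_exp {α : ℝ} (hα : -1 < α) (q : ℝ[X]) {c : ℝ}
    (hc : c < 1 / 2) : MemLp (fun x => q.eval x * exp (c * x)) 2 (laguerreMeasure α) := by
  rw [memLp_two_iff_integrable_sq (by fun_prop), integrable_laguerreMeasure_iff]
  refine (integrableOn_Ioi_eval_mul_rpow_mul_exp_neg_mul (q * q) hα (b := 1 - 2 * c)
    (by linarith)).congr_fun (fun x _ => ?_) measurableSet_Ioi
  beta_reduce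
  rw [eval_mul, show -(1 - 2 * c) * x = c * x + c * x + -x by ring, exp_add, exp_add]
  ring

/-- for `α > -1` and a real polynomial `η` with no zeros on `[0,∞)`,
the set of polynomial multiples of `η` is dense in `L²((0,∞); x^α e^{-x} dx)`. -/
theorem eta_poly_dense (α : ℝ) (hα : -1 < α) (η : Polynomial ℝ)
    (hη : ∀ x : ℝ, 0 ≤ x → Polynomial.eval x η ≠ 0) :
    Dense {f : Lp ℝ 2 (laguerreMeasure α) |
      ∃ p : Polynomial ℝ,
        ∀ᵐ x ∂(laguerreMeasure α), f x = Polynomial.eval x (η * p)} := by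
  change Dense (polynomialMultiples (laguerreMeasure α) 2 η : Set (Lp ℝ 2 (laguerreMeasure α)))
  rw [Submodule.dense_iff_topologicalClosure_eq_top, Submodule.topologicalClosure_eq_top_iff,
    Submodule.eq_bot_iff]
  intro g hg
  have hmom := integral_pow_mul_eq_zero_of_mem_orthogonal
    (fun q => by simpa using memLp_laguerreMeasure_eval_mul_exp hα q (c := 0) (by norm_num)) hg
  have hint (n : ℕ) : Integrable (fun x => x ^ n * exp (1 / 4 * x) * (η.eval x * g x))
      (laguerreMeasure α) := by
    refine ((memLp_laguerreMeasure_eval_mul_exp hα (X ^ n * η) (c := 1 / 4)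
      (by norm_num)).integrable_mul (Lp.memLp g)).congr (Eventually.of_forall fun x => ?_)
    simp only [Pi.mul_apply, eval_mul, eval_pow, eval_X]
    ring
  have hηg := ae_eq_zero_of_integral_pow_mul_eq_zero (by norm_num)
    ((laguerreMeasure_ae_pos α).mono fun _ hx => hx.le) hint hmom
  rw [Lp.eq_zero_iff_ae_eq_zero]
  filter_upwards [hηg, laguerreMeasure_ae_pos α] with x hx hpos
  exact (mul_eq_zero.mp hx).resolve_left (hη x hpos.le)
end
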